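/- Let c > 0 and let R̄ ⊂ C be a finite generic set of requests containing the origin. Then the service time satisfies M_{C,ver}(R̄) − 1 − 1/c ≤ ST(R̄) ≤ M_{C,ver}(R̄) + 1 + 2/c, where M_{C,ver}(R̄) is the length of the longest chain in R̄ with respect to ≤_ver. -/

import Mathlib

/-- Horizontal order on the strip `U` (points of `ℝ²`, `(t,r)` coordinates):
`(t₁,r₁) ≤_hor (t₂,r₂)` iff `t₁ ≤ t₂` and `c(t₂−t₁) ≥ |r₂−r₁|`. -/
def horRel (c : ℝ) (P Q : ℝ × ℝ) : Prop :=
  P.1 ≤ Q.1 ∧ |Q.2 - P.2| ≤ c * (Q.1 - P.1)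

/-- Vertical order on the strip: `r₂ − r₁ ≥ c|t₂ − t₁|`. -/
def verRel (c : ℝ) (P Q : ℝ × ℝ) : Prop := c * |Q.1 - P.1| ≤ Q.2 - P.2

/-- The projection `π : U → C`, with the cylinder `C` realized as the
fundamental domain `[0,1) × [0,1]`. -/
noncomputable def piC (P : ℝ × ℝ) : ℝ × ℝ := (Int.fract P.1, P.2)

/-- The vertical order induced on the cylinder: comparability of some lifts. -/
def verRelC (c : ℝ) (R₁ R₂ : ℝ × ℝ) : Prop :=
  ∃ Q₁ Q₂ : ℝ × ℝ, piC Q₁ = piC R₁ ∧ piC Q₂ = piC R₂ ∧ verRel c Q₁ Q₂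

/-- A tour of the request set `R` servicing all requests within `k` disk
rotations: a `≤_hor`-chain in `π⁻¹(R)` starting at `(0,0)`, meeting each fiber
exactly once, that can return to `(k,0)` (disk location `(0,0)` after `k`
rotations). -/
def IsTour (c : ℝ) (R : Finset (ℝ × ℝ)) (k : ℕ) : Prop :=
  ∃ n : ℕ, n + 1 = R.card ∧
    ∃ Q : Fin (n + 1) → ℝ × ℝ,
      Q 0 = (0, 0) ∧
      (∀ i, piC (Q i) ∈ R) ∧
      Function.Injective (fun i => piC (Q i)) ∧
      (∀ i j : Fin (n + 1), i ≤ j → horRel c (Q i) (Q j)) ∧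
      horRel c (Q (Fin.last n)) ((k : ℝ), 0)

/-- The service time of a request set: the least number of rotations realizable
by a tour. -/
noncomputable def serviceTime (c : ℝ) (R : Finset (ℝ × ℝ)) : ℕ :=
  sInf {k : ℕ | IsTour c R k}

/-- `M_{C,ver}(R̄)`: the length of the longest `≤_ver`-chain in `R̄ ⊆ C`. -/
noncomputable def maxChainC (c : ℝ) (R : Finset (ℝ × ℝ)) : ℕ :=
  sSup {n : ℕ | ∃ f : Fin n → ℝ × ℝ, (∀ i, f i ∈ R) ∧ Function.Injective f ∧
    ∀ i j : Fin n, i ≤ j → verRelC c (f i) (f j)}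

/-! Upper bound: let `φ P` be the largest total weight `∑ ⌈Δr/c − Δt⌉₊` along a `≤_ver`-chain
of requests ending at `P`; genericity makes `r` strictly increase along such chains, so this is a
longest path in a finite acyclic graph. Serving `P` at time `φ P + t_P` is a `≤_hor`-chain once
the requests are sorted by these times, and since `φ P + t_P ≤ r_P / c + M` (with
`M = M_{C,ver}(R̄)`) it can return to the origin after `M + ⌈2/c⌉₊` turns.

Lower bound: lift a longest `≤_ver`-chain of `R̄` step by step to a strictly vertical chain
`(T_i, r_i)` in `U`. A tour serves its `i`-th element at `(T_i + w_i, r_i)` with `w_i ∈ ℤ`, and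
`0 ≤ w_i ≤ k`. Two indices with `w_i = w_j` would give a pair of points that is both strictly
vertical and horizontal, so the `w_i` are distinct and `M ≤ ST + 1`. -/

open Finset Relation

lemma horRel_refl (c : ℝ) (P : ℝ × ℝ) : horRel c P P := by
  simp [horRel]

lemma horRel_trans {c : ℝ} {P Q S : ℝ × ℝ} (hPQ : horRel c P Q) (hQS : horRel c Q S) :
    horRel c P S := by
  refine ⟨hPQ.1.trans hQS.1, ?_⟩
  calc |S.2 - P.2| ≤ |S.2 - Q.2| + |Q.2 - P.2| := abs_sub_le _ _ _
    _ ≤ c * (S.1 - P.1) := by linarith [hPQ.2, hQS.2]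

lemma abs_snd_sub_le_of_horRel {c : ℝ} {P Q : ℝ × ℝ} (h : horRel c P Q ∨ horRel c Q P) :
    |Q.2 - P.2| ≤ c * |Q.1 - P.1| := by
  rcases h with ⟨h₁, h₂⟩ | ⟨h₁, h₂⟩
  · rwa [abs_of_nonneg (sub_nonneg.2 h₁)]
  · rwa [abs_sub_comm, abs_sub_comm Q.1, abs_of_nonneg (sub_nonneg.2 h₁)]

lemma verRel_trans {c : ℝ} (hc : 0 ≤ c) {P Q S : ℝ × ℝ} (hPQ : verRel c P Q)
    (hQS : verRel c Q S) : verRel c P S := by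
  unfold verRel at *
  calc c * |S.1 - P.1| ≤ c * (|S.1 - Q.1| + |Q.1 - P.1|) :=
        mul_le_mul_of_nonneg_left (abs_sub_le _ _ _) hc
    _ ≤ S.2 - P.2 := by linarith

lemma piC_eq_piC_iff {X Y : ℝ × ℝ} : piC X = piC Y ↔ ∃ z : ℤ, Y = (X.1 + z, X.2) := by
  simp only [piC, Prod.ext_iff, Int.fract_eq_fract]
  constructor
  · rintro ⟨⟨z, hz⟩, h₂⟩
    exact ⟨-z, by push_cast; linarith, h₂.symm⟩
  · rintro ⟨z, h₁, h₂⟩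
    exact ⟨⟨-z, by push_cast; linarith⟩, h₂.symm⟩

lemma piC_of_mem_Ico {P : ℝ × ℝ} (h : P.1 ∈ Set.Ico (0 : ℝ) 1) : piC P = P :=
  Prod.ext (Int.fract_eq_self.2 h) rfl

lemma verRelC_iff {c : ℝ} {P Q : ℝ × ℝ} :
    verRelC c P Q ↔ ∃ m : ℤ, c * |Q.1 + m - P.1| ≤ Q.2 - P.2 := by
  constructor
  · rintro ⟨X, Y, hX, hY, hXY⟩
    obtain ⟨z₁, rfl⟩ := piC_eq_piC_iff.1 hX.symm
    obtain ⟨z₂, rfl⟩ := piC_eq_piC_iff.1 hY.symm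
    refine ⟨z₂ - z₁, ?_⟩
    unfold verRel at hXY
    push_cast
    convert hXY using 3
    simp only
    ring
  · rintro ⟨m, hm⟩
    refine ⟨P, (Q.1 + m, Q.2), rfl, piC_eq_piC_iff.2 ⟨-m, ?_⟩, hm⟩
    ext <;> simp

lemma verRelC_refl (c : ℝ) (P : ℝ × ℝ) : verRelC c P P :=
  verRelC_iff.2 ⟨0, by simp⟩

lemma verRelC.snd_le {c : ℝ} (hc : 0 ≤ c) {P Q : ℝ × ℝ} (h : verRelC c P Q) : P.2 ≤ Q.2 := by
  obtain ⟨m, hm⟩ := verRelC_iff.1 h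
  nlinarith [abs_nonneg (Q.1 + m - P.1)]

lemma verRelC_trans {c : ℝ} (hc : 0 ≤ c) {P Q S : ℝ × ℝ} (hPQ : verRelC c P Q)
    (hQS : verRelC c Q S) : verRelC c P S := by
  obtain ⟨m, hm⟩ := verRelC_iff.1 hPQ
  obtain ⟨m', hm'⟩ := verRelC_iff.1 hQS
  refine verRelC_iff.2 ⟨m + m', ?_⟩
  have h := verRel_trans hc (P := P) (Q := (Q.1 + m, Q.2)) (S := (S.1 + (m + m' : ℤ), S.2))
    hm (by unfold verRel; push_cast; convert hm' using 3; ring)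
  simpa [verRel] using h

section LongestPath

variable {α β : Type*} (S : Finset α) (r : α → α → Prop) (w : α → α → ℕ)

def IsPath (h : ℕ) (g : ℕ → α) : Prop :=
  (∀ i ≤ h, g i ∈ S) ∧ ∀ i < h, r (g i) (g (i + 1))

def pathWeight (h : ℕ) (g : ℕ → α) : ℕ :=
  ∑ i ∈ range h, w (g i) (g (i + 1))

def pathWeights (Q : α) : Set ℕ :=
  {v | ∃ h g, IsPath S r h g ∧ g h = Q ∧ pathWeight w h g = v}

noncomputable def longestPath (Q : α) : ℕ :=
  sSup (pathWeights S r w Q)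

variable {S r w}

lemma IsPath.reflTransGen {h : ℕ} {g : ℕ → α} (hg : IsPath S r h g) {i j : ℕ} (hij : i ≤ j)
    (hj : j ≤ h) : ReflTransGen r (g i) (g j) := by
  induction j, hij using Nat.le_induction with
  | base => exact .refl
  | succ j _ ih => exact (ih (by omega)).tail (hg.2 j (by omega))

lemma IsPath.snoc {h : ℕ} {g : ℕ → α} (hg : IsPath S r h g) {Q : α} (hQ : Q ∈ S)
    (hr : r (g h) Q) :
    IsPath S r (h + 1) (Function.update g (h + 1) Q) ∧
      pathWeight w (h + 1) (Function.update g (h + 1) Q) = pathWeight w h g + w (g h) Q := by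
  have hlow : ∀ i ≤ h, Function.update g (h + 1) Q i = g i :=
    fun i hi => Function.update_of_ne (by omega) _ _
  refine ⟨⟨fun i hi => ?_, fun i hi => ?_⟩, ?_⟩
  · rcases Nat.lt_or_ge i (h + 1) with hi' | hi'
    · rw [hlow i (by omega)]; exact hg.1 i (by omega)
    · rw [show i = h + 1 by omega, Function.update_self]; exact hQ
  · rcases Nat.lt_or_ge i h with hi' | hi'
    · rw [hlow i (by omega), hlow (i + 1) (by omega)]; exact hg.2 i hi'
    · rw [show i = h by omega, hlow h le_rfl, Function.update_self]; exact hr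
  · rw [pathWeight, sum_range_succ, hlow h le_rfl, Function.update_self, pathWeight]
    congr 1
    exact sum_congr rfl fun i hi => by
      rw [hlow i (by simp at hi; omega), hlow (i + 1) (by simp at hi; omega)]

lemma IsPath.pathWeight_le (F : α → ℝ)
    (hw : ∀ P ∈ S, ∀ Q ∈ S, r P Q → (w P Q : ℝ) ≤ F Q - F P + 1) {h : ℕ} {g : ℕ → α}
    (hg : IsPath S r h g) : (pathWeight w h g : ℝ) ≤ F (g h) - F (g 0) + h := by
  calc (pathWeight w h g : ℝ) ≤ ∑ i ∈ range h, (F (g (i + 1)) - F (g i) + 1) := by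
        push_cast [pathWeight]
        exact sum_le_sum fun i hi => by
          simp only [mem_range] at hi
          exact hw _ (hg.1 i (by omega)) _ (hg.1 (i + 1) (by omega)) (hg.2 i hi)
    _ = F (g h) - F (g 0) + h := by
        rw [sum_add_distrib, sum_range_sub (fun i => F (g i))]
        simp

variable [Preorder β] {f : α → β}

lemma IsPath.lt (hf : ∀ P ∈ S, ∀ Q ∈ S, r P Q → f P < f Q) {h : ℕ} {g : ℕ → α}
    (hg : IsPath S r h g) {i j : ℕ} (hij : i < j) (hj : j ≤ h) : f (g i) < f (g j) := by
  induction j, hij using Nat.le_induction with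
  | base => exact hf _ (hg.1 i (by omega)) _ (hg.1 _ hj) (hg.2 i (by omega))
  | succ j _ ih =>
    exact (ih (by omega)).trans (hf _ (hg.1 j (by omega)) _ (hg.1 _ hj) (hg.2 j (by omega)))

lemma IsPath.injOn (hf : ∀ P ∈ S, ∀ Q ∈ S, r P Q → f P < f Q) {h : ℕ} {g : ℕ → α}
    (hg : IsPath S r h g) : Set.InjOn g (Set.Iic h) := by
  intro i hi j hj hij
  by_contra hne
  rcases Nat.lt_or_gt_of_ne hne with hlt | hlt
  · exact (hg.lt hf hlt hj).ne (congrArg f hij)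
  · exact (hg.lt hf hlt hi).ne (congrArg f hij.symm)

lemma IsPath.lt_card (hf : ∀ P ∈ S, ∀ Q ∈ S, r P Q → f P < f Q) {h : ℕ} {g : ℕ → α}
    (hg : IsPath S r h g) : h < S.card := by
  have := card_le_card_of_injOn g (s := range (h + 1)) (t := S)
    (fun i hi => hg.1 i (by simp at hi; omega))
    (fun i hi j hj => hg.injOn hf (by simp at hi ⊢; omega) (by simp at hj ⊢; omega))
  simpa using this

lemma bddAbove_pathWeights (hf : ∀ P ∈ S, ∀ Q ∈ S, r P Q → f P < f Q) (Q : α) :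
    BddAbove (pathWeights S r w Q) := by
  set B := (S ×ˢ S).sup fun p => w p.1 p.2
  refine ⟨S.card * B, ?_⟩
  rintro _ ⟨h, g, hg, -, rfl⟩
  calc pathWeight w h g ≤ ∑ _i ∈ range h, B := sum_le_sum fun i hi => by
        simp only [mem_range] at hi
        exact le_sup (f := fun p => w p.1 p.2) (b := (g i, g (i + 1)))
          (mem_product.2 ⟨hg.1 i (by omega), hg.1 (i + 1) (by omega)⟩)
    _ = h * B := by simp
    _ ≤ S.card * B := Nat.mul_le_mul_right _ (hg.lt_card hf).le

lemma longestPath_mem (hf : ∀ P ∈ S, ∀ Q ∈ S, r P Q → f P < f Q) {Q : α} (hQ : Q ∈ S) :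
    longestPath S r w Q ∈ pathWeights S r w Q :=
  Nat.sSup_mem ⟨_, 0, fun _ => Q, ⟨fun _ _ => hQ, by simp⟩, rfl, rfl⟩ (bddAbove_pathWeights hf Q)

lemma add_le_longestPath (hf : ∀ P ∈ S, ∀ Q ∈ S, r P Q → f P < f Q) {P Q : α} (hP : P ∈ S)
    (hQ : Q ∈ S) (hPQ : r P Q) : longestPath S r w P + w P Q ≤ longestPath S r w Q := by
  obtain ⟨h, g, hg, rfl, hv⟩ := longestPath_mem hf hP
  obtain ⟨hg', hv'⟩ := hg.snoc (w := w) hQ hPQ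
  exact le_csSup (bddAbove_pathWeights hf Q) ⟨_, _, hg', Function.update_self .., by rw [hv', hv]⟩

lemma longestPath_eq_zero (hf : ∀ P ∈ S, ∀ Q ∈ S, r P Q → f P < f Q) {Q : α} (hQ : Q ∈ S)
    (hmin : ∀ P ∈ S, ¬ r P Q) : longestPath S r w Q = 0 := by
  obtain ⟨h, g, hg, hgQ, hv⟩ := longestPath_mem (w := w) hf hQ
  rcases h with _ | h
  · simpa [pathWeight] using hv.symm
  · exact absurd (hgQ ▸ hg.2 h (by omega)) (hmin _ (hg.1 h (by omega)))

end LongestPath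

lemma Finset.exists_enum_strictMono {α : Type*} {S : Finset α} {key : α → ℝ}
    (hkey : Set.InjOn key S) {n : ℕ} (hn : S.card = n) :
    ∃ E : Fin n → α, (∀ i, E i ∈ S) ∧ StrictMono (key ∘ E) ∧ ∀ P ∈ S, ∃ i, E i = P := by
  obtain ⟨e, he⟩ : ∃ e : Fin n ↪o ℝ, Set.range e = key '' S :=
    ⟨(S.image key).orderEmbOfFin (by rw [card_image_of_injOn hkey, hn]), by simp⟩
  have hmem : ∀ i, ∃ P ∈ S, key P = e i := fun i => he.subset ⟨i, rfl⟩
  choose E hES hEe using hmem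
  refine ⟨E, hES, fun i j hij => by simpa [hEe] using e.strictMono hij, fun P hP => ?_⟩
  obtain ⟨i, hi⟩ := he.superset ⟨P, hP, rfl⟩
  exact ⟨i, hkey (hES i) hP ((hEe i).trans hi)⟩

lemma bddAbove_chainLengths (c : ℝ) (R : Finset (ℝ × ℝ)) :
    BddAbove {n : ℕ | ∃ f : Fin n → ℝ × ℝ, (∀ i, f i ∈ R) ∧ Function.Injective f ∧
      ∀ i j : Fin n, i ≤ j → verRelC c (f i) (f j)} := by
  refine ⟨R.card, ?_⟩
  rintro n ⟨f, hf, hinj, -⟩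
  simpa using card_le_card_of_injOn f (s := univ) (fun i _ => hf i) hinj.injOn

lemma exists_chain_maxChainC (c : ℝ) (R : Finset (ℝ × ℝ)) :
    ∃ f : Fin (maxChainC c R) → ℝ × ℝ, (∀ i, f i ∈ R) ∧ Function.Injective f ∧
      ∀ i j, i ≤ j → verRelC c (f i) (f j) := by
  refine Nat.sSup_mem ?_ (bddAbove_chainLengths c R)
  exact ⟨0, Fin.elim0, Fin.rec0, fun i => i.elim0, fun i => i.elim0⟩

lemma mul_abs_sub_lt_of_succ {c : ℝ} (hc : 0 ≤ c) {T r : ℕ → ℝ} {M : ℕ}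
    (hstep : ∀ l, l + 1 < M → c * |T (l + 1) - T l| < r (l + 1) - r l) {i j : ℕ} (hij : i < j)
    (hj : j < M) : c * |T j - T i| < r j - r i := by
  induction j, hij using Nat.le_induction with
  | base => exact hstep i hj
  | succ j hij ih =>
    calc c * |T (j + 1) - T i| ≤ c * |T (j + 1) - T j| + c * |T j - T i| := by
          rw [← mul_add]; exact mul_le_mul_of_nonneg_left (abs_sub_le _ _ _) hc
      _ < r (j + 1) - r i := by linarith [hstep j hj, ih (by omega)]

lemma exists_int_lift_of_succ {c : ℝ} (hc : 0 ≤ c) {G : ℕ → ℝ × ℝ} {M : ℕ}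
    (hG : ∀ l, l + 1 < M →
      ∃ m : ℤ, c * |(G (l + 1)).1 + m - (G l).1| < (G (l + 1)).2 - (G l).2) :
    ∃ z : ℕ → ℤ, z 0 = 0 ∧ ∀ i j, i < j → j < M →
      c * |((G j).1 + z j) - ((G i).1 + z i)| < (G j).2 - (G i).2 := by
  have hG' : ∀ l, ∃ m : ℤ, l + 1 < M →
      c * |(G (l + 1)).1 + m - (G l).1| < (G (l + 1)).2 - (G l).2 := fun l => by
    by_cases hl : l + 1 < M
    · exact (hG l hl).imp fun _ hm _ => hm
    · exact ⟨0, fun h => absurd h hl⟩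
  choose m hm using hG'
  refine ⟨fun l => ∑ i ∈ range l, m i, by simp, fun i j hij hj =>
    mul_abs_sub_lt_of_succ (T := fun l => (G l).1 + ∑ i ∈ range l, m i) (r := fun l => (G l).2)
      hc (fun l hl => ?_) hij hj⟩
  convert hm l hl using 3
  push_cast [sum_range_succ]
  ring

lemma int_shift_mem_Icc {c : ℝ} (hc : 0 < c) {k : ℕ} {T₀ r₀ T a r : ℝ} {w : ℤ}
    (hw : a = T + w) (hT₀ : T₀ ∈ Set.Ico (0 : ℝ) 1) (hr₀ : 0 ≤ r₀) (hver : c * |T - T₀| ≤ r - r₀)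
    (hstart : r ≤ c * a) (hend : r ≤ c * (k - a)) : w ∈ Icc 0 (k : ℤ) := by
  have h₁ : c * T - c * T₀ ≤ c * |T - T₀| := by
    rw [← mul_sub]; exact mul_le_mul_of_nonneg_left (le_abs_self _) hc.le
  have h₂ : c * T₀ - c * T ≤ c * |T - T₀| := by
    rw [← mul_sub, abs_sub_comm]; exact mul_le_mul_of_nonneg_left (le_abs_self _) hc.le
  have hcw : c * w = c * a - c * T := by rw [hw]; ring
  have hcT₀ : c * T₀ < c * 1 := mul_lt_mul_of_pos_left hT₀.2 hc
  have hcT₀' : 0 ≤ c * T₀ := mul_nonneg hc.le hT₀.1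
  rw [mul_sub] at hend
  have hlow : ((-1 : ℤ) : ℝ) < w := lt_of_mul_lt_mul_left (a := c) (by push_cast; linarith) hc.le
  have hup : (w : ℝ) ≤ ((k : ℤ) : ℝ) := le_of_mul_le_mul_left (a := c) (by push_cast; linarith) hc
  exact mem_Icc.2 ⟨by exact_mod_cast hlow, by exact_mod_cast hup⟩

lemma le_succ_of_vertical_of_horizontal {c : ℝ} (hc : 0 < c) {M k : ℕ} {T a r : ℕ → ℝ}
    {w : ℕ → ℤ} (hw : ∀ l < M, a l = T l + w l) (hT0 : T 0 ∈ Set.Ico (0 : ℝ) 1) (hr0 : 0 ≤ r 0)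
    (hver : ∀ i j, i < j → j < M → c * |T j - T i| < r j - r i)
    (hhor : ∀ i < M, ∀ j < M, |r j - r i| ≤ c * |a j - a i|)
    (hstart : ∀ l < M, r l ≤ c * a l) (hend : ∀ l < M, r l ≤ c * (k - a l)) : M ≤ k + 1 := by
  have hmaps : Set.MapsTo w (range M) (Icc 0 (k : ℤ)) := by
    intro l hl
    simp only [coe_range, Set.mem_Iio] at hl
    refine int_shift_mem_Icc hc (hw l hl) hT0 hr0 ?_ (hstart l hl) (hend l hl)
    rcases Nat.eq_zero_or_pos l with rfl | hl0
    · simp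
    · exact (hver 0 l hl0 hl).le
  have hne : ∀ i j, i < j → j < M → w i ≠ w j := by
    intro i j hlt hj hij
    have hi : i < M := hlt.trans hj
    have hdiff : a j - a i = T j - T i := by rw [hw i hi, hw j hj, hij]; ring
    have := hhor i hi j hj
    rw [hdiff] at this
    linarith [hver i j hlt hj, le_abs_self (r j - r i)]
  have hinj : Set.InjOn w (range M) := by
    intro i hi j hj hij
    simp only [coe_range, Set.mem_Iio] at hi hj
    by_contra hij'
    rcases Nat.lt_or_gt_of_ne hij' with hlt | hlt
    · exact hne i j hlt hj hij
    · exact hne j i hlt hi hij.symm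
  simpa using card_le_card_of_injOn w hmaps hinj

lemma IsTour.exists_visitTime {c : ℝ} {R : Finset (ℝ × ℝ)} {k : ℕ} (h : IsTour c R k) :
    ∃ a : ℝ × ℝ → ℝ, ∀ P ∈ R, Int.fract (a P) = P.1 ∧ P.2 ≤ c * a P ∧ P.2 ≤ c * (k - a P) ∧
      ∀ Q ∈ R, |Q.2 - P.2| ≤ c * |a Q - a P| := by
  obtain ⟨n, hn, Q, hQ0, hQR, hinj, hhor, hend⟩ := h
  have himg : univ.image (fun i => piC (Q i)) = R := by
    refine eq_of_subset_of_card_le (fun x hx => ?_) ?_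
    · obtain ⟨i, -, rfl⟩ := mem_image.1 hx
      exact hQR i
    · rw [card_image_of_injective _ hinj, card_univ, Fintype.card_fin, hn]
  have hsurj : ∀ P ∈ R, ∃ i, piC (Q i) = P := fun P hP => by
    rw [← himg] at hP
    simpa using hP
  choose! σ hσ using hsurj
  have hsnd : ∀ P ∈ R, (Q (σ P)).2 = P.2 := fun P hP => (congrArg Prod.snd (hσ P hP) :)
  refine ⟨fun P => (Q (σ P)).1, fun P hP =>
    ⟨congrArg Prod.fst (hσ P hP), ?_, ?_, fun P' hP' => ?_⟩⟩
  · have := (hhor 0 (σ P) (Fin.zero_le _)).2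
    rw [hQ0, hsnd P hP] at this
    simpa using (le_abs_self _).trans this
  · have := (horRel_trans (hhor _ _ (Fin.le_last (σ P))) hend).2
    rw [hsnd P hP, zero_sub, abs_neg] at this
    exact (le_abs_self _).trans this
  · have := abs_snd_sub_le_of_horRel ((le_total (σ P) (σ P')).imp (hhor _ _) (hhor _ _))
    rwa [hsnd P hP, hsnd P' hP'] at this

def verStep (c : ℝ) (P Q : ℝ × ℝ) : Prop := P ≠ Q ∧ verRelC c P Q

-- The least number of extra turns after which `Q` can follow `P` on a `≤_hor`-chain.
noncomputable def stepWeight (c : ℝ) (P Q : ℝ × ℝ) : ℕ := ⌈(Q.2 - P.2) / c - (Q.1 - P.1)⌉₊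

noncomputable def potential (c : ℝ) (R : Finset (ℝ × ℝ)) : ℝ × ℝ → ℕ :=
  longestPath R (verStep c) (stepWeight c)

noncomputable def liftU (c : ℝ) (R : Finset (ℝ × ℝ)) (P : ℝ × ℝ) : ℝ × ℝ :=
  (potential c R P + P.1, P.2)

lemma natCeil_le_add_one {x : ℝ} (hx : -1 ≤ x) : (⌈x⌉₊ : ℝ) ≤ x + 1 := by
  rcases le_or_gt x 0 with h | h
  · simp [Nat.ceil_eq_zero.2 h]; linarith
  · exact (Nat.ceil_lt_add_one h.le).le

lemma piC_liftU (c : ℝ) (R : Finset (ℝ × ℝ)) (P : ℝ × ℝ) : piC (liftU c R P) = piC P :=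
  (piC_eq_piC_iff.2 ⟨potential c R P, by simp [liftU, add_comm]⟩).symm

section Requests

variable {c : ℝ} {R : Finset (ℝ × ℝ)} (hc : 0 < c)
  (hsub : ∀ P ∈ R, P.1 ∈ Set.Ico (0:ℝ) 1 ∧ P.2 ∈ Set.Icc (0:ℝ) 1)
  (hgen : ∀ P ∈ R, ∀ Q ∈ R, ∀ m : ℤ, ((P.1 + (m:ℝ), P.2) ≠ Q) →
      c * |Q.1 - (P.1 + (m:ℝ))| ≠ |Q.2 - P.2|)

include hc hsub hgen in
lemma exists_lt_of_verStep {P Q : ℝ × ℝ} (hP : P ∈ R) (hQ : Q ∈ R) (h : verStep c P Q) :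
    ∃ m : ℤ, c * |Q.1 + m - P.1| < Q.2 - P.2 := by
  obtain ⟨m, hm⟩ := verRelC_iff.1 h.2
  refine ⟨m, hm.lt_of_ne fun heq => hgen P hP Q hQ (-m) (fun hPQ => h.1 ?_) ?_⟩
  · rw [← piC_of_mem_Ico (hsub P hP).1, ← piC_of_mem_Ico (hsub Q hQ).1, ← hPQ]
    exact piC_eq_piC_iff.2 ⟨-m, rfl⟩
  · have hr : 0 ≤ Q.2 - P.2 := heq ▸ mul_nonneg hc.le (abs_nonneg _)
    rw [abs_of_nonneg hr, ← heq]
    congr 2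
    push_cast
    ring

include hc hsub hgen in
lemma snd_lt_of_verStep : ∀ P ∈ R, ∀ Q ∈ R, verStep c P Q → P.2 < Q.2 := by
  intro P hP Q hQ h
  obtain ⟨m, hm⟩ := exists_lt_of_verStep hc hsub hgen hP hQ h
  nlinarith [abs_nonneg (Q.1 + m - P.1)]

include hc hsub hgen in
lemma succ_le_maxChainC_of_isPath {h : ℕ} {g : ℕ → ℝ × ℝ} (hg : IsPath R (verStep c) h g) :
    h + 1 ≤ maxChainC c R := by
  have hrel : ∀ {P Q}, ReflTransGen (verStep c) P Q → verRelC c P Q := by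
    intro P Q hPQ
    induction hPQ with
    | refl => exact verRelC_refl c _
    | tail _ hstep ih => exact verRelC_trans hc.le ih hstep.2
  refine le_csSup (bddAbove_chainLengths c R) ⟨fun i => g i, fun i => hg.1 i (by omega),
    fun i j hij => Fin.ext ?_, fun i j hij => hrel (hg.reflTransGen hij (by omega))⟩
  exact hg.injOn (snd_lt_of_verStep hc hsub hgen) (by simp; omega) (by simp; omega) hij

include hc hsub hgen in
lemma potential_add_fst_le {P : ℝ × ℝ} (hP : P ∈ R) :
    (potential c R P : ℝ) + P.1 ≤ P.2 / c + maxChainC c R := by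
  obtain ⟨h, g, hg, rfl, hv⟩ := longestPath_mem (w := stepWeight c)
    (snd_lt_of_verStep hc hsub hgen) hP
  have hw : ∀ X ∈ R, ∀ Y ∈ R, verStep c X Y →
      (stepWeight c X Y : ℝ) ≤ (Y.2 / c - Y.1) - (X.2 / c - X.1) + 1 := by
    intro X hX Y hY hXY
    have hr : 0 ≤ (Y.2 - X.2) / c := div_nonneg (sub_nonneg.2 (hXY.2.snd_le hc.le)) hc.le
    refine (natCeil_le_add_one ?_).trans_eq (by ring)
    linarith [(hsub X hX).1.1, (hsub Y hY).1.2]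
  have hM : (h : ℝ) + 1 ≤ maxChainC c R := by
    exact_mod_cast succ_le_maxChainC_of_isPath hc hsub hgen hg
  have hwt := hg.pathWeight_le _ hw
  have h0 := hsub _ (hg.1 0 (Nat.zero_le h))
  have : 0 ≤ (g 0).2 / c := div_nonneg h0.2.1 hc.le
  rw [potential, ← hv]
  linarith [h0.1.2]

include hc hsub hgen in
lemma potential_zero (h0 : ((0:ℝ), (0:ℝ)) ∈ R) : potential c R (0, 0) = 0 :=
  longestPath_eq_zero (snd_lt_of_verStep hc hsub hgen) h0 fun P hP hP0 =>
    (snd_lt_of_verStep hc hsub hgen P hP _ h0 hP0).not_ge (hsub P hP).2.1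

include hc hsub hgen in
lemma horRel_liftU_of_verStep {P Q : ℝ × ℝ} (hP : P ∈ R) (hQ : Q ∈ R) (h : verStep c P Q) :
    horRel c (liftU c R P) (liftU c R Q) := by
  have hpot : (potential c R P : ℝ) + stepWeight c P Q ≤ potential c R Q := by
    exact_mod_cast add_le_longestPath (snd_lt_of_verStep hc hsub hgen) hP hQ h
  have hwt := Nat.le_ceil ((Q.2 - P.2) / c - (Q.1 - P.1))
  have hr : 0 ≤ Q.2 - P.2 := sub_nonneg.2 (h.2.snd_le hc.le)
  have hgap : (Q.2 - P.2) / c ≤ (liftU c R Q).1 - (liftU c R P).1 := by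
    simp only [liftU, stepWeight] at hpot ⊢
    linarith
  refine ⟨by linarith [div_nonneg hr hc.le], ?_⟩
  show |Q.2 - P.2| ≤ _
  rw [abs_of_nonneg hr]
  exact (div_le_iff₀' hc).1 hgap

include hc hsub hgen in
lemma horRel_liftU_of_lt {P Q : ℝ × ℝ} (hP : P ∈ R) (hQ : Q ∈ R)
    (hlt : (liftU c R P).1 < (liftU c R Q).1) : horRel c (liftU c R P) (liftU c R Q) := by
  have hne : P ≠ Q := by rintro rfl; exact hlt.false
  by_cases hPQ : verRelC c P Q
  · exact horRel_liftU_of_verStep hc hsub hgen hP hQ ⟨hne, hPQ⟩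
  by_cases hQP : verRelC c Q P
  · exact absurd (horRel_liftU_of_verStep hc hsub hgen hQ hP ⟨hne.symm, hQP⟩).1 hlt.not_ge
  have hnot : ∀ {X Y : ℝ × ℝ}, ¬ verRelC c X Y → ¬ verRel c (liftU c R X) (liftU c R Y) :=
    fun hXY hv => hXY ⟨_, _, piC_liftU c R _, piC_liftU c R _, hv⟩
  have h₁ := hnot hPQ
  have h₂ := hnot hQP
  simp only [verRel, not_le, abs_sub_comm (liftU c R P).1, abs_of_pos (sub_pos.2 hlt)] at h₁ h₂
  refine ⟨hlt.le, abs_le.2 ⟨?_, h₁.le⟩⟩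
  simp only [liftU] at h₂ ⊢
  linarith

include hc hsub hgen in
lemma injOn_liftU_fst : Set.InjOn (fun P => (liftU c R P).1) R := by
  have hne : ∀ {P Q : ℝ × ℝ}, P ∈ R → Q ∈ R → P.1 = Q.1 → P.2 < Q.2 →
      (liftU c R P).1 ≠ (liftU c R Q).1 := by
    intro P Q hP hQ h₁ h₂ heq
    have hv : verRelC c P Q := verRelC_iff.2 ⟨0, by simp [h₁]; linarith⟩
    have hPQ : P ≠ Q := fun h => h₂.ne (h ▸ rfl)
    have := (horRel_liftU_of_verStep hc hsub hgen hP hQ ⟨hPQ, hv⟩).2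
    rw [heq, sub_self, mul_zero, abs_nonpos_iff] at this
    exact h₂.ne' (by simpa [liftU, sub_eq_zero] using this)
  have hfract : ∀ X ∈ R, Int.fract (liftU c R X).1 = X.1 := fun X hX =>
    congrArg Prod.fst ((piC_liftU c R X).trans (piC_of_mem_Ico (hsub X hX).1))
  intro P hP Q hQ heq
  have h₁ : P.1 = Q.1 := (hfract P hP).symm.trans ((congrArg Int.fract heq).trans (hfract Q hQ))
  rcases lt_trichotomy P.2 Q.2 with h₂ | h₂ | h₂
  · exact absurd heq (hne hP hQ h₁ h₂)
  · exact Prod.ext h₁ h₂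
  · exact absurd heq.symm (hne hQ hP h₁.symm h₂)

include hc hsub hgen in
lemma horRel_liftU_end {P : ℝ × ℝ} (hP : P ∈ R) :
    horRel c (liftU c R P) ((maxChainC c R + ⌈2 / c⌉₊ : ℕ), 0) := by
  have hpot := potential_add_fst_le hc hsub hgen hP
  have hr := (hsub P hP).2
  have hceil := Nat.le_ceil (2 / c)
  have h₁ : P.2 / c ≤ 1 / c := div_le_div_of_nonneg_right hr.2 hc.le
  have hgap : P.2 / c ≤ ((maxChainC c R + ⌈2 / c⌉₊ : ℕ) : ℝ) - (liftU c R P).1 := by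
    simp only [liftU]
    push_cast
    linarith [show 2 / c = 1 / c + 1 / c by ring]
  refine ⟨by linarith [div_nonneg hr.1 hc.le], ?_⟩
  show |0 - P.2| ≤ _
  rw [zero_sub, abs_neg, abs_of_nonneg hr.1]
  exact (div_le_iff₀' hc).1 hgap

include hc hsub hgen in
lemma isTour_maxChainC_add (h0 : ((0:ℝ), (0:ℝ)) ∈ R) :
    IsTour c R (maxChainC c R + ⌈2 / c⌉₊) := by
  obtain ⟨n, hn⟩ := Nat.exists_eq_succ_of_ne_zero (card_ne_zero_of_mem h0)
  obtain ⟨E, hER, hmono, hsurj⟩ := exists_enum_strictMono (injOn_liftU_fst hc hsub hgen) hn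
  have hpot0 := potential_zero hc hsub hgen h0
  have hE0 : E 0 = (0, 0) := by
    obtain ⟨i, hi⟩ := hsurj _ h0
    refine hi ▸ congrArg E (hmono.injective (le_antisymm ?_ ?_))
    · simpa [hi, liftU, hpot0] using hmono.monotone (Fin.zero_le i)
    · simpa [hi, liftU, hpot0] using add_nonneg (Nat.cast_nonneg _) (hsub _ (hER 0)).1.1
  have hpiC : ∀ i, piC (liftU c R (E i)) = E i := fun i =>
    (piC_liftU c R _).trans (piC_of_mem_Ico (hsub _ (hER i)).1)
  refine ⟨n, hn.symm, fun i => liftU c R (E i), ?_, fun i => (hpiC i).symm ▸ hER i, ?_, ?_,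
    horRel_liftU_end hc hsub hgen (hER _)⟩
  · simp [hE0, liftU, hpot0]
  · intro i j hij
    simp only [hpiC] at hij
    exact hmono.injective (congrArg (fun P => (liftU c R P).1) hij)
  · intro i j hij
    rcases hij.eq_or_lt with rfl | hlt
    · exact horRel_refl c _
    · exact horRel_liftU_of_lt hc hsub hgen (hER i) (hER j) (hmono hlt)

include hc hsub hgen in
lemma maxChainC_le_succ_of_isTour {k : ℕ} (ht : IsTour c R k) : maxChainC c R ≤ k + 1 := by
  obtain ⟨a, ha⟩ := ht.exists_visitTime
  set M := maxChainC c R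
  obtain ⟨F, hFR, hFinj, hFchain⟩ := exists_chain_maxChainC c R
  rcases Nat.eq_zero_or_pos M with hM | hM
  · omega
  set G : ℕ → ℝ × ℝ := fun l => if h : l < M then F ⟨l, h⟩ else F ⟨0, hM⟩
  have hGR : ∀ l, G l ∈ R := fun l => by unfold G; split_ifs <;> exact hFR _
  have hGF : ∀ l (h : l < M), G l = F ⟨l, h⟩ := fun l h => dif_pos h
  obtain ⟨z, hz0, hz⟩ := exists_int_lift_of_succ hc.le (G := G) (M := M) fun l hl => by
    refine exists_lt_of_verStep hc hsub hgen (hGR l) (hGR (l + 1)) ⟨?_, ?_⟩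
    · rw [hGF l (by omega), hGF (l + 1) hl]
      exact hFinj.ne (by simp [Fin.ext_iff])
    · rw [hGF l (by omega), hGF (l + 1) hl]
      exact hFchain _ _ (by simp [Fin.le_def])
  refine le_succ_of_vertical_of_horizontal hc (T := fun l => (G l).1 + z l)
    (a := fun l => a (G l)) (r := fun l => (G l).2) (w := fun l => ⌊a (G l)⌋ - z l)
    (fun l _ => ?_) (by simpa [hz0] using (hsub _ (hGR 0)).1) (hsub _ (hGR 0)).2.1 hz
    (fun i _ j _ => ((ha _ (hGR i)).2.2.2 _ (hGR j))) (fun l _ => (ha _ (hGR l)).2.1)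
    (fun l _ => (ha _ (hGR l)).2.2.1)
  have := (ha _ (hGR l)).1
  rw [Int.fract] at this
  push_cast
  linarith

end Requests

/-- `M_{C,ver}(R̄) − 1 − 1/c ≤ ST(R̄) ≤ M_{C,ver}(R̄) + 1 + 2/c`. -/
theorem service_time_bounds (c : ℝ) (hc : 0 < c) (R : Finset (ℝ × ℝ))
    (hsub : ∀ P ∈ R, P.1 ∈ Set.Ico (0:ℝ) 1 ∧ P.2 ∈ Set.Icc (0:ℝ) 1)
    (h0 : ((0:ℝ), (0:ℝ)) ∈ R)
    (hgen : ∀ P ∈ R, ∀ Q ∈ R, ∀ m : ℤ, ((P.1 + (m:ℝ), P.2) ≠ Q) →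
      c * |Q.1 - (P.1 + (m:ℝ))| ≠ |Q.2 - P.2|) :
    (maxChainC c R : ℝ) - 1 - 1 / c ≤ (serviceTime c R : ℝ) ∧
    (serviceTime c R : ℝ) ≤ (maxChainC c R : ℝ) + 1 + 2 / c := by
  have htour := isTour_maxChainC_add hc hsub hgen h0
  have hupper : serviceTime c R ≤ maxChainC c R + ⌈2 / c⌉₊ := Nat.sInf_le htour
  have hST : IsTour c R (serviceTime c R) := Nat.sInf_mem (s := {k | IsTour c R k}) ⟨_, htour⟩
  have hlower : maxChainC c R ≤ serviceTime c R + 1 :=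
    maxChainC_le_succ_of_isTour hc hsub hgen hST
  have hceil := Nat.ceil_lt_add_one (div_pos two_pos hc).le
  constructor
  · have : (maxChainC c R : ℝ) ≤ serviceTime c R + 1 := by exact_mod_cast hlower
    linarith [one_div_pos.2 hc]
  · have : (serviceTime c R : ℝ) ≤ maxChainC c R + ⌈2 / c⌉₊ := by exact_mod_cast hupper
    linarith
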